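/- For any integers n, m ≥ 4 there exists an oriented graph G = (V, E) with |V| = n and |E| = m such that ν(G) ≥ 2⁻¹⁴ · (min(|V|², |E|) · min(|V|, |E|)). -/

import Mathlib

/-- An oriented graph: finite nonempty sets of vertices and edges with
origin and tail maps. -/
structure OrientedGraph where
  V : Type
  E : Type
  [fintypeV : Fintype V]
  [fintypeE : Fintype E]
  [nonemptyV : Nonempty V]
  [nonemptyE : Nonempty E]
  o : E → V
  t : E → V

attribute [instance] OrientedGraph.fintypeV OrientedGraph.fintypeE
  OrientedGraph.nonemptyV OrientedGraph.nonemptyE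

namespace OrientedGraph

variable (G : OrientedGraph)

/-- `G.IsPath p u v` : the edge sequence `p` is a path from `u` to `v`
(consecutive edges are composable; paths of length 0 at any vertex are allowed). -/
def IsPath (p : List G.E) (u v : G.V) : Prop :=
  List.Chain' (fun e f => G.t e = G.o f) p ∧
  ((p = [] ∧ u = v) ∨
    ∃ h : p ≠ [], u = G.o (p.head h) ∧ v = G.t (p.getLast h))

/-- The label of an edge sequence: the product of the labels of its edges
(the empty sequence maps to `1`). -/
def labelProd {M : Type} [Monoid M] (l : G.E → M) (s : List G.E) : M :=
  (s.map l).prod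

/-- The diagram `(G, l)` is commutative: any two paths with the same origin and
the same tail have equal labels. -/
def IsCommutative {M : Type} [Monoid M] (l : G.E → M) : Prop :=
  ∀ (u v : G.V) (p₁ p₂ : List G.E),
    G.IsPath p₁ u v → G.IsPath p₂ u v → G.labelProd l p₁ = G.labelProd l p₂

/-- A complete system of relations for `G`: for every monoid `M` and every
labeling `l : E → M`, the diagram `(G, l)` is commutative iff all relations hold. -/
def IsComplete (R : Finset (List G.E × List G.E)) : Prop :=
  ∀ (M : Type) [Monoid M], ∀ l : G.E → M,
    G.IsCommutative l ↔ ∀ r ∈ R, G.labelProd l r.1 = G.labelProd l r.2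

/-- A minimal complete system of relations: no proper subset is complete. -/
def IsMinimalComplete (R : Finset (List G.E × List G.E)) : Prop :=
  G.IsComplete R ∧ ∀ R' : Finset (List G.E × List G.E), R' ⊂ R → ¬ G.IsComplete R'

/-- The commutativity rank `η(G)`: the minimal cardinality of a complete
system of relations for `G`. -/
noncomputable def eta : ℕ :=
  sInf {n : ℕ | ∃ R : Finset (List G.E × List G.E), G.IsComplete R ∧ R.card = n}

/-- `S'` is obtained from `S` by one multiplication. -/
def MulStep (S S' : Set (List G.E)) : Prop :=
  ∃ s ∈ S, ∃ s' ∈ S, S' = S ∪ {s ++ s'}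

/-- `G.mCost S S'` : the minimal number of multiplications needed to obtain `S'`
from `S` (`⊤` if impossible). -/
noncomputable def mCost (S S' : Set (List G.E)) : ℕ∞ :=
  sInf {k : ℕ∞ | ∃ n : ℕ, k = n ∧ ∃ f : ℕ → Set (List G.E),
    f 0 = S ∧ f n = S' ∧ ∀ i < n, G.MulStep (f i) (f (i + 1))}

/-- `S_R`: the set of all edge sequences appearing in the relations of `R`. -/
def relSet (R : Finset (List G.E × List G.E)) : Set (List G.E) :=
  {s | ∃ r ∈ R, s = r.1 ∨ s = r.2}

/-- `ℰ`: the empty sequence together with all one-edge sequences. -/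
def baseSet : Set (List G.E) :=
  {s | s = [] ∨ ∃ e : G.E, s = [e]}

/-- `m(R)`: the minimal number of multiplications needed to build all sequences
appearing in `R`, starting from `ℰ`. -/
noncomputable def mRel (R : Finset (List G.E × List G.E)) : ℕ∞ :=
  sInf {k : ℕ∞ | ∃ S : Set (List G.E), G.relSet R ⊆ S ∧ k = G.mCost G.baseSet S}

/-- The multiplication rank `ν(G)`. -/
noncomputable def nu : ℕ∞ :=
  sInf {k : ℕ∞ | ∃ R : Finset (List G.E × List G.E), G.IsComplete R ∧ k = G.mRel R}

/-- A 4-tuple of edges `(a, b, c, d)` forms a rhomboid. -/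
def IsRhomboid (r : G.E × G.E × G.E × G.E) : Prop :=
  G.o r.1 = G.o r.2.2.1 ∧ G.t r.2.1 = G.t r.2.2.2 ∧
  G.t r.1 = G.o r.2.1 ∧ G.t r.2.2.1 = G.o r.2.2.2 ∧
  G.o r.1 ≠ G.t r.1 ∧ G.o r.1 ≠ G.o r.2.2.2 ∧ G.o r.1 ≠ G.t r.2.2.2 ∧
  G.t r.1 ≠ G.o r.2.2.2 ∧ G.t r.1 ≠ G.t r.2.2.2 ∧ G.o r.2.2.2 ≠ G.t r.2.2.2

/-- Two rhomboids `(a, b, c, d)` and `(a', b', c', d')` are disjoint. -/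
def RhDisjoint (r r' : G.E × G.E × G.E × G.E) : Prop :=
  (r.1 ≠ r'.1 ∨ r.2.1 ≠ r'.2.1) ∧
  (r.1 ≠ r'.2.2.1 ∨ r.2.1 ≠ r'.2.2.2) ∧
  (r.2.2.1 ≠ r'.2.2.1 ∨ r.2.2.2 ≠ r'.2.2.2) ∧
  (r.2.2.1 ≠ r'.1 ∨ r.2.2.2 ≠ r'.2.1)

/-- `𝔯𝔥(G)`: the maximal cardinality of a family of pairwise disjoint rhomboids in `G`. -/
noncomputable def rhNum : ℕ :=
  sSup {n : ℕ | ∃ F : Finset (G.E × G.E × G.E × G.E),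
    (∀ r ∈ F, G.IsRhomboid r) ∧
    (∀ r ∈ F, ∀ r' ∈ F, r ≠ r' → G.RhDisjoint r r') ∧ F.card = n}

/-- `𝔏(G)`: the number of loops of `G`. -/
noncomputable def loopCount : ℕ :=
  Nat.card {e : G.E // G.o e = G.t e}

/-- `G` is quasi-acyclic: no directed cycle visiting two or more distinct vertices. -/
def QuasiAcyclic : Prop :=
  ∀ u v : G.V, u ≠ v →
    ∀ p q : List G.E, G.IsPath p u v → G.IsPath q v u → False

/-- `G` is 2-path-bounded: every oriented path avoiding loop edges has length at most 2. -/
def TwoPathBounded : Prop :=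
  ∀ (p : List G.E) (u v : G.V), G.IsPath p u v →
    (∀ e ∈ p, G.o e ≠ G.t e) → p.length ≤ 2

/-- `G` has a pair of multiple edges. -/
def HasMultipleEdges : Prop :=
  ∃ e e' : G.E, e ≠ e' ∧ G.t e = G.t e' ∧ G.o e = G.o e' ∧ G.t e ≠ G.o e

/-- `G` has a triangle. -/
def HasTriangle : Prop :=
  ∃ a b c : G.E, G.o a = G.o b ∧ G.t b = G.o c ∧ G.t c = G.t a ∧
    G.o a ≠ G.t a ∧ G.o b ≠ G.t b ∧ G.o c ≠ G.t c

/-- `G` has no loops. -/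
def NoLoops : Prop := ∀ e : G.E, G.o e ≠ G.t e

/-- Every edge occurring on either side of the relation `r` is a loop. -/
def AllLoops (r : List G.E × List G.E) : Prop :=
  (∀ e ∈ r.1, G.o e = G.t e) ∧ (∀ e ∈ r.2, G.o e = G.t e)

/-- Both sides of the relation `r` contain at least one non-loop edge. -/
def BothSidesNonLoop (r : List G.E × List G.E) : Prop :=
  (∃ e ∈ r.1, G.o e ≠ G.t e) ∧ (∃ e ∈ r.2, G.o e ≠ G.t e)

end OrientedGraph

/-- The triploid `T(n₁, n₂, n₃, n₀, e)`. -/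
def Triploid (n₁ n₂ n₃ n₀ e : ℕ) (hn₁ : 0 < n₁) (he : n₂ * (n₁ + n₃) ≤ e)
    (he₀ : 0 < e) : OrientedGraph where
  V := Fin n₀ ⊕ Fin n₁ ⊕ Fin n₂ ⊕ Fin n₃
  E := (Fin n₁ × Fin n₂) ⊕ (Fin n₂ × Fin n₃) ⊕ Fin (e - n₂ * (n₁ + n₃))
  nonemptyV := ⟨Sum.inr (Sum.inl ⟨0, hn₁⟩)⟩
  nonemptyE := by
    by_cases h : n₂ * (n₁ + n₃) < e
    · exact ⟨Sum.inr (Sum.inr ⟨0, by omega⟩)⟩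
    · have h2 : 0 < n₂ := by
        rcases Nat.eq_zero_or_pos n₂ with h0 | h0
        · exfalso; subst h0; simp at h; omega
        · exact h0
      exact ⟨Sum.inl (⟨0, hn₁⟩, ⟨0, h2⟩)⟩
  o := Sum.elim (fun p => Sum.inr (Sum.inl p.1))
        (Sum.elim (fun p => Sum.inr (Sum.inr (Sum.inl p.1)))
          (fun _ => Sum.inr (Sum.inl ⟨0, hn₁⟩)))
  t := Sum.elim (fun p => Sum.inr (Sum.inr (Sum.inl p.2)))
        (Sum.elim (fun p => Sum.inr (Sum.inr (Sum.inr p.2)))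
          (fun _ => Sum.inr (Sum.inl ⟨0, hn₁⟩)))

/-!
In the graph with layers `I`, `J`, `K` of sizes `q`, `p`, `q` and all edges `I → J → K`, let
`≈` be the congruence on words generated by parallel paths. If the edges `I_i → J_j` and
`J_j → K_k` have no parallel copies, the classes of the empty word and of these two one-letter
words are singletons (length and the product of elementary matrices `E_{o e, t e}` are
`≈`-invariants), so the two-letter path `w = I_i → J_j → K_k` can be split off from its class.
If `w` occurred in no relation of a complete system `R`, the quotient by this finer congruence
would satisfy `R` without being commutative, as `w` is parallel to `I_i → J_0 → K_k`. Hence every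
complete system mentions these `q²(p - 1)` words of length two, each costing one multiplication,
and `q ≈ min(n, m) / 8`, `p ≈ min(n - 2q, m / 2q)` give the bound.
-/

namespace Con

variable {M : Type*} [Mul M]

def SplitsOff (c : Con M) (w : M) : Prop :=
  ∀ ⦃a b a' b' : M⦄, a * b = w → c a a' → c b b' → (a = w → a' = w) → (b = w → b' = w) →
    a' * b' = w

def splitOff (c : Con M) (w : M) (hw : c.SplitsOff w) : Con M where
  r a b := c a b ∧ (a = w ↔ b = w)
  iseqv :=
    ⟨fun a => ⟨c.refl a, Iff.rfl⟩, fun ⟨h, hiff⟩ => ⟨c.symm h, hiff.symm⟩,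
      fun ⟨h, hiff⟩ ⟨h', hiff'⟩ => ⟨c.trans h h', hiff.trans hiff'⟩⟩
  mul' := fun ⟨ha, haw⟩ ⟨hb, hbw⟩ =>
    ⟨c.mul ha hb, ⟨fun h => hw h ha hb haw.1 hbw.1,
      fun h => hw h (c.symm ha) (c.symm hb) haw.2 hbw.2⟩⟩

end Con

namespace OrientedGraph

variable {G : OrientedGraph}

@[simp]
theorem isPath_nil {u v : G.V} : G.IsPath [] u v ↔ u = v :=
  ⟨fun ⟨_, h⟩ => by simpa using h, fun h => ⟨List.IsChain.nil, Or.inl ⟨rfl, h⟩⟩⟩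

@[simp]
theorem isPath_cons {e : G.E} {p : List G.E} {u v : G.V} :
    G.IsPath (e :: p) u v ↔ u = G.o e ∧ G.IsPath p (G.t e) v := by
  show List.IsChain _ (e :: p) ∧ _ ↔ _ ∧ List.IsChain _ p ∧ _
  cases p with
  | nil => simp [eq_comm]
  | cons f p => simp [List.isChain_cons_cons]; tauto

def IsGradedBy (G : OrientedGraph) (rk : G.V → ℕ) : Prop :=
  ∀ e, rk (G.t e) = rk (G.o e) + 1

theorem IsPath.rank_add_length {rk : G.V → ℕ} (hG : G.IsGradedBy rk) {p : List G.E}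
    {u v : G.V} (hp : G.IsPath p u v) : rk u + p.length = rk v := by
  induction p generalizing u with
  | nil => simp_all
  | cons e p ih =>
    obtain ⟨rfl, htail⟩ := isPath_cons.1 hp
    have := ih htail
    rw [hG e] at this
    simp only [List.length_cons]
    omega

theorem IsPath.labelProd_single [DecidableEq G.V] {p : List G.E} {u v : G.V}
    (hp : G.IsPath p u v) (hne : p ≠ []) :
    G.labelProd (fun e => Matrix.single (G.o e) (G.t e) (1 : ℕ)) p = Matrix.single u v 1 := by
  induction p generalizing u with
  | nil => exact absurd rfl hne
  | cons e p ih =>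
    obtain ⟨rfl, htail⟩ := isPath_cons.1 hp
    rcases eq_or_ne p [] with rfl | hp'
    · simp_all [labelProd]
    · have := ih htail hp'
      simp only [labelProd, List.map_cons, List.prod_cons] at this ⊢
      rw [this, Matrix.single_mul_single_same, mul_one]

variable (G) in
def pathCon : Con (FreeMonoid G.E) :=
  conGen fun a b => ∃ u v, G.IsPath a.toList u v ∧ G.IsPath b.toList u v

theorem pathCon_of_isPath {p₁ p₂ : List G.E} {u v : G.V} (h₁ : G.IsPath p₁ u v)
    (h₂ : G.IsPath p₂ u v) : G.pathCon (.ofList p₁) (.ofList p₂) :=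
  ConGen.Rel.of _ _ ⟨u, v, h₁, h₂⟩

theorem isCommutative_iff_pathCon_le_ker {M : Type} [Monoid M] (l : G.E → M) :
    G.IsCommutative l ↔ G.pathCon ≤ Con.ker (FreeMonoid.lift l) := by
  simp only [IsCommutative, labelProd, ← FreeMonoid.lift_ofList]
  refine ⟨fun h => Con.conGen_le.2 fun a b ⟨u, v, ha, hb⟩ => h u v _ _ ha hb,
    fun h u v p₁ p₂ h₁ h₂ => h (pathCon_of_isPath h₁ h₂)⟩

/-- Completeness applied to the quotient labeling `e ↦ [e]_c`. -/
theorem IsComplete.pathCon_le_iff {R : Finset (List G.E × List G.E)} (hR : G.IsComplete R)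
    (c : Con (FreeMonoid G.E)) :
    G.pathCon ≤ c ↔ ∀ r ∈ R, c (.ofList r.1) (.ofList r.2) := by
  have hlift : FreeMonoid.lift (fun e => (c.mk' (.of e))) = c.mk' := FreeMonoid.lift_restrict _
  have := hR c.Quotient fun e => c.mk' (.of e)
  rw [isCommutative_iff_pathCon_le_ker, hlift, Con.mk'_ker] at this
  simp only [labelProd, ← FreeMonoid.lift_ofList, hlift] at this
  simpa only [← Con.ker_rel, Con.mk'_ker] using this

/-- Otherwise the labeling by `pathCon.splitOff w` would satisfy `R` without being commutative. -/
theorem IsComplete.mem_relSet {R : Finset (List G.E × List G.E)} (hR : G.IsComplete R)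
    {w w' : List G.E} {u v : G.V} (hw : G.IsPath w u v) (hw' : G.IsPath w' u v) (hne : w' ≠ w)
    (hsplit : G.pathCon.SplitsOff (.ofList w)) : w ∈ G.relSet R := by
  by_contra hmem
  have hRpath := (hR.pathCon_le_iff G.pathCon).1 le_rfl
  have hle : G.pathCon ≤ G.pathCon.splitOff _ hsplit := (hR.pathCon_le_iff _).2 fun r hr =>
    ⟨hRpath r hr, iff_of_false (fun h => hmem ⟨r, hr, .inl h.symm⟩)
      (fun h => hmem ⟨r, hr, .inr h.symm⟩)⟩
  exact hne ((hle (pathCon_of_isPath hw hw')).2.1 rfl)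

variable {rk : G.V → ℕ}

theorem IsGradedBy.length_eq_of_pathCon (hG : G.IsGradedBy rk) {a b : FreeMonoid G.E}
    (h : G.pathCon a b) : a.toList.length = b.toList.length := by
  have hcomm : G.IsCommutative fun _ => Multiplicative.ofAdd (1 : ℕ) := by
    intro u v p₁ p₂ h₁ h₂
    have := (h₁.rank_add_length hG).trans (h₂.rank_add_length hG).symm
    simp [labelProd]
    omega
  simpa [FreeMonoid.lift_apply] using (isCommutative_iff_pathCon_le_ker _).1 hcomm h

theorem IsGradedBy.eq_one_of_pathCon (hG : G.IsGradedBy rk) {b : FreeMonoid G.E}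
    (h : G.pathCon 1 b) : b = 1 :=
  FreeMonoid.toList.injective (List.eq_nil_of_length_eq_zero (hG.length_eq_of_pathCon h).symm)

def HasNoParallel (x : G.E) : Prop :=
  ∀ e, G.o e = G.o x → G.t e = G.t x → e = x

/-- In a graded graph, parallel paths have the same length, hence the same product of the
elementary matrices `E_{o e, t e}`. -/
theorem IsGradedBy.eq_of_pathCon_of (hG : G.IsGradedBy rk) {x : G.E} (hx : HasNoParallel x)
    {b : FreeMonoid G.E} (h : G.pathCon (.of x) b) : b = .of x := by
  classical
  have hlen := hG.length_eq_of_pathCon h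
  obtain ⟨e, hb⟩ : ∃ e, b.toList = [e] := List.length_eq_one_iff.1 (by simpa using hlen.symm)
  have hcomm : G.IsCommutative fun e => Matrix.single (G.o e) (G.t e) (1 : ℕ) := by
    intro u v p₁ p₂ h₁ h₂
    have := (h₁.rank_add_length hG).trans (h₂.rank_add_length hG).symm
    rcases eq_or_ne p₁ [] with rfl | hp₁
    · obtain rfl : p₂ = [] := List.eq_nil_of_length_eq_zero (by simpa using this.symm)
      rfl
    · rw [h₁.labelProd_single hp₁, h₂.labelProd_single (by rintro rfl; simp_all)]
  have hmat := (isCommutative_iff_pathCon_le_ker _).1 hcomm h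
  simp only [Con.ker_rel, FreeMonoid.lift_apply, FreeMonoid.toList_of, hb, List.map_cons,
    List.map_nil, List.prod_singleton] at hmat
  have := congrFun₂ hmat (G.o e) (G.t e)
  simp only [Matrix.single_apply, and_self, if_true] at this
  split_ifs at this with hxe
  · rw [← FreeMonoid.ofList_toList b, hb, hx e hxe.1.symm hxe.2.symm]
    rfl

theorem IsGradedBy.splitsOff_pair (hG : G.IsGradedBy rk) {x y : G.E} (hx : HasNoParallel x)
    (hy : HasNoParallel y) : G.pathCon.SplitsOff (.ofList [x, y]) := by
  intro a b a' b' hab ha hb haw hbw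
  have hlist : a.toList ++ b.toList = [x, y] := by rw [← FreeMonoid.toList_mul, hab]; rfl
  rcases hal : a.toList with _ | ⟨c, _ | ⟨d, _ | ⟨f, l⟩⟩⟩ <;> rw [hal] at hlist
  · obtain rfl : a = 1 := FreeMonoid.toList.injective hal
    rw [hG.eq_one_of_pathCon ha, hbw (FreeMonoid.toList.injective hlist), one_mul]
  · obtain ⟨rfl, hbl⟩ := List.cons_eq_cons.1 hlist
    obtain rfl : a = .of c := FreeMonoid.toList.injective hal
    obtain rfl : b = .of y := FreeMonoid.toList.injective hbl
    rw [hG.eq_of_pathCon_of hx ha, hG.eq_of_pathCon_of hy hb]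
    rfl
  · obtain ⟨rfl, rfl, hbl⟩ : c = x ∧ d = y ∧ b.toList = [] := by simpa using hlist
    obtain rfl : b = 1 := FreeMonoid.toList.injective hbl
    rw [haw (FreeMonoid.toList.injective hal), hG.eq_one_of_pathCon hb, mul_one]
  · simpa using congrArg List.length hlist

theorem exists_finset_of_mulSteps (f : ℕ → Set (List G.E)) (n : ℕ)
    (hf : ∀ i < n, G.MulStep (f i) (f (i + 1))) :
    ∃ F : Finset (List G.E), F.card ≤ n ∧ f n ⊆ f 0 ∪ F := by
  classical
  induction n with
  | zero => exact ⟨∅, by simp⟩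
  | succ n ih =>
    obtain ⟨F, hF, hsub⟩ := ih fun i hi => hf i (by omega)
    obtain ⟨s, -, s', -, heq⟩ := hf n (by omega)
    refine ⟨insert (s ++ s') F, (F.card_insert_le _).trans (by omega), ?_⟩
    rw [heq, Finset.coe_insert]
    exact Set.union_subset (hsub.trans (by gcongr; exact Set.subset_insert _ _))
      (by simp)

theorem card_le_mCost {S S' : Set (List G.E)} {W : Finset (List G.E)} (hW : ↑W ⊆ S')
    (hWS : Disjoint (↑W) S) : (W.card : ℕ∞) ≤ G.mCost S S' := by
  refine le_sInf ?_
  rintro _ ⟨n, rfl, f, rfl, rfl, hf⟩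
  obtain ⟨F, hF, hsub⟩ := exists_finset_of_mulSteps f n hf
  have : W ⊆ F := fun w hw => ((hsub (hW hw)).resolve_left (hWS.notMem_of_mem_left hw))
  exact_mod_cast (Finset.card_le_card this).trans hF

theorem card_le_mRel {R : Finset (List G.E × List G.E)} {W : Finset (List G.E)}
    (hW : ↑W ⊆ G.relSet R) (hlen : ∀ w ∈ W, 2 ≤ w.length) : (W.card : ℕ∞) ≤ G.mRel R := by
  refine le_sInf ?_
  rintro _ ⟨S, hS, rfl⟩
  refine card_le_mCost (hW.trans hS) (Set.disjoint_left.2 fun w hw hbase => ?_)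
  rcases hbase with rfl | ⟨e, rfl⟩ <;> simpa using hlen _ hw

theorem card_le_nu {W : Finset (List G.E)}
    (hW : ∀ R, G.IsComplete R → ↑W ⊆ G.relSet R) (hlen : ∀ w ∈ W, 2 ≤ w.length) :
    (W.card : ℕ∞) ≤ G.nu :=
  le_sInf fun _ ⟨R, hR, hk⟩ => hk ▸ card_le_mRel (hW R hR) hlen

end OrientedGraph

/-- Layers `I`, `J`, `K` of sizes `q`, `p`, `q` with all edges `I → J` and `J → K`, plus `x`
parallel copies of the edge `I₀ → J₀` and `n₀` isolated vertices. -/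
abbrev layeredGraph (n₀ q p x : ℕ) [NeZero q] [NeZero p] : OrientedGraph where
  V := Fin n₀ ⊕ Fin q ⊕ Fin p ⊕ Fin q
  E := (Fin q × Fin p) ⊕ (Fin p × Fin q) ⊕ Fin x
  nonemptyV := ⟨.inr (.inl 0)⟩
  nonemptyE := ⟨.inl (0, 0)⟩
  o := Sum.elim (fun a => .inr (.inl a.1))
    (Sum.elim (fun a => .inr (.inr (.inl a.1))) fun _ => .inr (.inl 0))
  t := Sum.elim (fun a => .inr (.inr (.inl a.2)))
    (Sum.elim (fun a => .inr (.inr (.inr a.2))) fun _ => .inr (.inr (.inl 0)))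

namespace layeredGraph

open OrientedGraph

variable {n₀ q p x : ℕ} [NeZero q] [NeZero p]

theorem card_V : Fintype.card (layeredGraph n₀ q p x).V = n₀ + q + p + q := by
  simp [layeredGraph, add_assoc]

theorem card_E : Fintype.card (layeredGraph n₀ q p x).E = q * p + p * q + x := by
  simp [layeredGraph, add_assoc]

theorem isGradedBy :
    (layeredGraph n₀ q p x).IsGradedBy (Sum.elim 0 (Sum.elim 0 (Sum.elim 1 2))) := by
  rintro (_ | _ | _) <;> rfl

def testWord (i : Fin q) (j : Fin p) (k : Fin q) : List (layeredGraph n₀ q p x).E :=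
  [.inl (i, j), .inr (.inl (j, k))]

theorem isPath_testWord (i : Fin q) (j : Fin p) (k : Fin q) :
    (layeredGraph n₀ q p x).IsPath (testWord i j k) (.inr (.inl i)) (.inr (.inr (.inr k))) :=
  isPath_cons.2 ⟨rfl, isPath_cons.2 ⟨rfl, isPath_nil.2 rfl⟩⟩

theorem hasNoParallel_left {i : Fin q} {j : Fin p} (hj : j ≠ 0) :
    HasNoParallel (G := layeredGraph n₀ q p x) (.inl (i, j)) := by
  rintro (⟨i', j'⟩ | _ | _) <;> simp_all [layeredGraph, eq_comm]

theorem hasNoParallel_right {j : Fin p} {k : Fin q} :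
    HasNoParallel (G := layeredGraph n₀ q p x) (.inr (.inl (j, k))) := by
  rintro (_ | ⟨j', k'⟩ | _) <;> simp_all [layeredGraph]

theorem testWord_mem_relSet {R : Finset (List (layeredGraph n₀ q p x).E × List _)}
    (hR : (layeredGraph n₀ q p x).IsComplete R) (i : Fin q) {j : Fin p} (hj : j ≠ 0) (k : Fin q) :
    testWord i j k ∈ (layeredGraph n₀ q p x).relSet R :=
  hR.mem_relSet (isPath_testWord i j k) (isPath_testWord i 0 k) (by simp [testWord, Ne.symm hj])
    (isGradedBy.splitsOff_pair (hasNoParallel_left hj) hasNoParallel_right)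

theorem le_nu : ((q * (p - 1) * q : ℕ) : ℕ∞) ≤ (layeredGraph n₀ q p x).nu := by
  classical
  let W := (Finset.univ : Finset (Fin q × {j : Fin p // j ≠ 0} × Fin q)).image
    fun t => testWord (n₀ := n₀) (x := x) t.1 t.2.1.1 t.2.2
  have hW : W.card = q * (p - 1) * q := by
    rw [Finset.card_image_of_injective]
    · simp [mul_assoc]
    · rintro ⟨i, j, k⟩ ⟨i', j', k'⟩ h
      simp_all [testWord, Subtype.ext_iff]
  rw [← hW]
  refine card_le_nu (fun R hR => ?_) (fun w hw => ?_)
  · simp only [W, Finset.coe_image, Finset.coe_univ, Set.image_univ, Set.range_subset_iff]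
    exact fun t => testWord_mem_relSet hR t.1 t.2.1.2 t.2.2
  · obtain ⟨t, -, rfl⟩ := Finset.mem_image.1 hw
    simp [testWord]

end layeredGraph

theorem exists_layer_sizes (n m : ℕ) (hn : 4 ≤ n) (hm : 4 ≤ m) :
    ∃ q p : ℕ, 1 ≤ q ∧ 2 ≤ p ∧ 2 * q + p ≤ n ∧ 2 * q * p ≤ m ∧
      min (n ^ 2) m * min n m ≤ 2 ^ 14 * (q * (p - 1) * q) := by
  set Q := min n m
  have hQn : Q ≤ n := min_le_left n m
  have hQm : Q ≤ m := min_le_right n m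
  set q := Q / 8 + 1
  set p := min (n - 2 * q) (m / (2 * q))
  have hq : Q < 8 * q := by omega
  have h2q : 2 * q ≤ Q := by omega
  have hp : 2 ≤ p := le_min (by omega) ((Nat.le_div_iff_mul_le (by omega)).2 (by omega))
  have hpm : p * (2 * q) ≤ m := (Nat.le_div_iff_mul_le (by omega)).1 (min_le_right _ _)
  have hpn : p ≤ n - 2 * q := min_le_left _ _
  refine ⟨q, p, by omega, hp, by omega, by linarith, ?_⟩
  have hA : min (n ^ 2) m ≤ 4 * (p - 1) * Q := by
    rcases min_cases (n - 2 * q) (m / (2 * q)) with ⟨hpn', -⟩ | ⟨hpm', -⟩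
    · calc min (n ^ 2) m ≤ min (n * n) (n * m) :=
            min_le_min (by rw [sq]) (Nat.le_mul_of_pos_left m (by omega))
        _ = n * Q := Nat.mul_min_mul_left n n m
        _ ≤ 4 * (p - 1) * Q := Nat.mul_le_mul_right _ (by omega)
    · have hm' : m < 2 * q * (p + 1) := by
        have := Nat.lt_mul_div_succ m (show 0 < 2 * q by omega)
        rwa [← hpm'] at this
      calc min (n ^ 2) m ≤ 2 * q * (p + 1) := (min_le_right _ _).trans hm'.le
        _ ≤ Q * (4 * (p - 1)) := Nat.mul_le_mul h2q (by omega)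
        _ = 4 * (p - 1) * Q := mul_comm _ _
  calc min (n ^ 2) m * Q ≤ 4 * (p - 1) * Q * Q := Nat.mul_le_mul_right _ hA
    _ ≤ 4 * (p - 1) * (8 * q) * (8 * q) := by gcongr
    _ ≤ 2 ^ 14 * (q * (p - 1) * q) := by ring_nf; omega

/-- Theorem (lower bound on multiplication rank): for any `n, m ≥ 4` there is a graph
with `n` vertices and `m` edges such that
`ν(G) ≥ 2⁻¹⁴ · (min(|V|², |E|) · min(|V|, |E|))`. -/
theorem nu_lower_bound (n m : ℕ) (hn : 4 ≤ n) (hm : 4 ≤ m) :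
    ∃ G : OrientedGraph, Fintype.card G.V = n ∧ Fintype.card G.E = m ∧
      ((min (Fintype.card G.V ^ 2) (Fintype.card G.E) *
          min (Fintype.card G.V) (Fintype.card G.E) : ℕ) : ℕ∞) ≤
        2 ^ 14 * G.nu := by
  obtain ⟨q, p, hq, hp, hqpn, hqpm, hbound⟩ := exists_layer_sizes n m hn hm
  have : NeZero q := ⟨by omega⟩
  have : NeZero p := ⟨by omega⟩
  let G := layeredGraph (n - (2 * q + p)) q p (m - 2 * q * p)
  have hV : Fintype.card G.V = n := by rw [layeredGraph.card_V]; omega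
  have hE : Fintype.card G.E = m := by
    rw [layeredGraph.card_E, mul_comm p q]
    have : q * p + q * p = 2 * q * p := by ring
    omega
  refine ⟨G, hV, hE, ?_⟩
  rw [hV, hE]
  calc ((min (n ^ 2) m * min n m : ℕ) : ℕ∞) ≤ ((2 ^ 14 * (q * (p - 1) * q) : ℕ) : ℕ∞) := by
        exact_mod_cast hbound
    _ = 2 ^ 14 * ((q * (p - 1) * q : ℕ) : ℕ∞) := by push_cast; rfl
    _ ≤ 2 ^ 14 * G.nu := by gcongr; exact layeredGraph.le_nu
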